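/- arXiv:2109.07030 — 2 statements merged into one kernel-verified Lean document; each statement's English description precedes it below -/
import Mathlib

section
/- Under the sequential randomization assumption with L̄(1) = (X̄(1), W̄(1)) and taking Z̄(1) = W̄(1), the functions h1(ā(1), l̄(1)) = E[Y | ā(1), l̄(1)] and h0(ā(1), l(0)) = E[h1(ā(1), L̄(1)) | a(0), L(0) = l(0)] solve the outcome-bridge integral equations E[Y | ā(1), z̄(1), x̄(1)] = E[H1(ā(1)) | ā(1), z̄(1), x̄(1)] and E[H1(ā(1)) | a(0), z(0), x(0)] = E[H0(ā(1)) | a(0), z(0), x(0)], and the resulting proximal g-formula E[h0(ā(1), L(0))] coincides with Robins' g-formula for E[Y_{ā(1)}]. -/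
/-!
When the proxies are the measured covariates, both bridge equations are instances of
`E[h(L) | L = l] = h(l)`. For the g-formula, consistency and sequential randomization (with
positivity, so that the conditioning events have positive mass) turn `E[Y | ā, L(0), L(1)]` into
`E[Y_ā | a(0), L(0), L(1)]` and then `E[Y_ā | a(0), L(0)]` into `E[Y_ā | L(0)]`; the tower property
of conditional expectation collapses the iterated regressions to `E[Y_ā]`.
-/

open Finset MeasureTheory

open scoped Classical

/-- Probability of an event on a finite outcome space with mass function `p`. -/
noncomputable def pr {Ω : Type*} [Fintype Ω] (p : Ω → ℝ) (E : Ω → Prop) : ℝ :=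
  ∑ ω, if E ω then p ω else 0

/-- Conditional expectation `E[f | E]` on a finite outcome space. -/
noncomputable def cexp {Ω : Type*} [Fintype Ω] (p : Ω → ℝ) (f : Ω → ℝ) (E : Ω → Prop) : ℝ :=
  (∑ ω, if E ω then p ω * f ω else 0) / pr p E

/-- Conditional probability `P(E | F)` on a finite outcome space. -/
noncomputable def cprob {Ω : Type*} [Fintype Ω] (p : Ω → ℝ) (E F : Ω → Prop) : ℝ :=
  pr p (fun ω => E ω ∧ F ω) / pr p F

/-- Expectation on a finite outcome space. -/
noncomputable def pexp {Ω : Type*} [Fintype Ω] (p : Ω → ℝ) (f : Ω → ℝ) : ℝ :=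
  ∑ ω, p ω * f ω

/-- `S` is conditionally independent of `T` given `C`:  for every pair of (bounded) test
functions `F, G` and every value `c` of `C` with positive probability, the conditional
expectation of the product factorizes. -/
def CondIndep {Ω α β γ : Type*} [Fintype Ω] (p : Ω → ℝ)
    (S : Ω → α) (T : Ω → β) (C : Ω → γ) : Prop :=
  ∀ (F : α → ℝ) (G : β → ℝ) (c : γ), pr p (fun ω => C ω = c) ≠ 0 →
    cexp p (fun ω => F (S ω) * G (T ω)) (fun ω => C ω = c) =
      cexp p (fun ω => F (S ω)) (fun ω => C ω = c) *
        cexp p (fun ω => G (T ω)) (fun ω => C ω = c)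

section FiniteProbability

variable {Ω : Type*} [Fintype Ω] {p : Ω → ℝ}

/-- The partial expectation `E[f; E] = E[f 𝟙_E]`. -/
noncomputable def setExp (p : Ω → ℝ) (f : Ω → ℝ) (E : Ω → Prop) : ℝ :=
  ∑ ω, if E ω then p ω * f ω else 0

theorem cexp_eq_setExp_div (f : Ω → ℝ) (E : Ω → Prop) :
    cexp p f E = setExp p f E / pr p E :=
  rfl

theorem pexp_eq_setExp (f : Ω → ℝ) : pexp p f = setExp p f fun _ => True := by
  simp [pexp, setExp]

theorem setExp_const (E : Ω → Prop) (c : ℝ) : setExp p (fun _ => c) E = pr p E * c := by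
  rw [setExp, pr, sum_mul]
  exact sum_congr rfl fun ω _ => by split_ifs <;> simp

theorem setExp_congr {f g : Ω → ℝ} {E : Ω → Prop} (h : ∀ ω, E ω → p ω ≠ 0 → f ω = g ω) :
    setExp p f E = setExp p g E := by
  refine sum_congr rfl fun ω _ => ?_
  split_ifs with hE
  · by_cases hω : p ω = 0
    · simp [hω]
    · rw [h ω hE hω]
  · rfl

theorem setExp_ite (S E : Ω → Prop) (f : Ω → ℝ) :
    setExp p (fun ω => if S ω then f ω else 0) E = setExp p f fun ω => S ω ∧ E ω := by
  refine sum_congr rfl fun ω _ => ?_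
  by_cases hS : S ω <;> by_cases hE : E ω <;> simp [hS, hE]

theorem setExp_fiberwise {γ : Type*} (f : Ω → ℝ) (E : Ω → Prop) (T : Ω → γ) :
    ∑ t ∈ univ.image T, setExp p f (fun ω => E ω ∧ T ω = t) = setExp p f E := by
  simp only [setExp]
  rw [sum_comm]
  refine sum_congr rfl fun ω _ => ?_
  by_cases hE : E ω <;> simp [hE]

theorem pr_eq_zero_iff (hp : ∀ ω, 0 ≤ p ω) {E : Ω → Prop} :
    pr p E = 0 ↔ ∀ ω, E ω → p ω = 0 := by
  rw [pr, sum_eq_zero_iff_of_nonneg fun ω _ => by split_ifs <;> simp [hp ω]]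
  refine forall_congr' fun ω => ?_
  by_cases hE : E ω <;> simp [hE]

theorem pr_ne_zero_of_mem (hp : ∀ ω, 0 ≤ p ω) {E : Ω → Prop} {ω : Ω} (hE : E ω)
    (hω : p ω ≠ 0) : pr p E ≠ 0 :=
  fun h => hω ((pr_eq_zero_iff hp).1 h ω hE)

theorem pr_and_ne_zero_of_cprob_pos {E F : Ω → Prop} (h : 0 < cprob p E F) :
    pr p (fun ω => E ω ∧ F ω) ≠ 0 := by
  intro h0
  simp [cprob, h0] at h

theorem pr_mul_cexp (hp : ∀ ω, 0 ≤ p ω) (f : Ω → ℝ) (E : Ω → Prop) :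
    pr p E * cexp p f E = setExp p f E := by
  by_cases h : pr p E = 0
  · rw [h, zero_mul, setExp_congr (g := fun _ => 0) fun ω hE hω =>
      absurd ((pr_eq_zero_iff hp).1 h ω hE) hω, setExp_const, mul_zero]
  · exact mul_div_cancel₀ _ h

theorem cexp_congr {f g : Ω → ℝ} {E F : Ω → Prop} (hEF : ∀ ω, E ω ↔ F ω)
    (hfg : ∀ ω, E ω → f ω = g ω) : cexp p f E = cexp p g F := by
  obtain rfl : E = F := funext fun ω => propext (hEF ω)
  rw [cexp_eq_setExp_div, cexp_eq_setExp_div, setExp_congr fun ω hE _ => hfg ω hE]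

theorem cexp_eq_of_forall_eq {f : Ω → ℝ} {E : Ω → Prop} {c : ℝ} (hE : pr p E ≠ 0)
    (hf : ∀ ω, E ω → f ω = c) : cexp p f E = c := by
  rw [cexp_eq_setExp_div, setExp_congr (g := fun _ => c) fun ω hω _ => hf ω hω, setExp_const,
    mul_div_cancel_left₀ _ hE]

theorem setExp_cexp_fiber {γ : Type*} (hp : ∀ ω, 0 ≤ p ω) (V : Ω → ℝ) (E : Ω → Prop)
    (T : Ω → γ) :
    setExp p (fun ω => cexp p V fun ω' => E ω' ∧ T ω' = T ω) E = setExp p V E := by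
  rw [← setExp_fiberwise _ E T, ← setExp_fiberwise V E T]
  refine sum_congr rfl fun t _ => ?_
  calc setExp p (fun ω => cexp p V fun ω' => E ω' ∧ T ω' = T ω) (fun ω => E ω ∧ T ω = t)
      = setExp p (fun _ => cexp p V fun ω' => E ω' ∧ T ω' = t) (fun ω => E ω ∧ T ω = t) :=
        setExp_congr fun ω hω _ => by rw [hω.2]
    _ = setExp p V (fun ω => E ω ∧ T ω = t) := by rw [setExp_const, pr_mul_cexp hp]

theorem cexp_tower {γ : Type*} (hp : ∀ ω, 0 ≤ p ω) {V g : Ω → ℝ} {E : Ω → Prop}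
    {T : Ω → γ} (hg : ∀ ω, E ω → p ω ≠ 0 → g ω = cexp p V fun ω' => E ω' ∧ T ω' = T ω) :
    cexp p g E = cexp p V E := by
  rw [cexp_eq_setExp_div, cexp_eq_setExp_div, setExp_congr hg, setExp_cexp_fiber hp]

theorem pexp_tower {γ : Type*} (hp : ∀ ω, 0 ≤ p ω) {V g : Ω → ℝ} {T : Ω → γ}
    (hg : ∀ ω, p ω ≠ 0 → g ω = cexp p V fun ω' => T ω' = T ω) :
    pexp p g = pexp p V := by
  rw [pexp_eq_setExp, pexp_eq_setExp, ← setExp_cexp_fiber hp V _ T]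
  exact setExp_congr fun ω _ hω =>
    (hg ω hω).trans (cexp_congr (fun _ => by rw [true_and]) fun _ _ => rfl)

theorem CondIndep.of_comp {α β γ δ : Type*} {S : Ω → α} {T : Ω → β} {C : Ω → γ}
    {e : γ → δ} (h : CondIndep p S T fun ω => e (C ω)) (he : Function.Injective e) :
    CondIndep p S T C := by
  intro F G c
  simpa only [he.eq_iff] using h F G (e c)

theorem CondIndep.cexp_eq {α γ : Type*} {S : Ω → α} {V : Ω → ℝ} {C : Ω → γ}
    (h : CondIndep p S V C) {a : α} {c : γ} (hC : pr p (fun ω => C ω = c) ≠ 0)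
    (hSC : pr p (fun ω => S ω = a ∧ C ω = c) ≠ 0) :
    cexp p V (fun ω => S ω = a ∧ C ω = c) = cexp p V fun ω => C ω = c := by
  have key := h (fun s => if s = a then 1 else 0) id c hC
  simp only [ite_mul, one_mul, zero_mul, id, cexp_eq_setExp_div, setExp_ite] at key
  rw [setExp_const, mul_one] at key
  rw [cexp_eq_setExp_div, cexp_eq_setExp_div]
  field_simp at key ⊢
  linear_combination key

theorem CondIndep.cexp_eq_of_cprob_pos {α γ : Type*} (hp : ∀ ω, 0 ≤ p ω) {S : Ω → α}
    {V : Ω → ℝ} {C : Ω → γ} (h : CondIndep p S V C) {a : α}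
    (hpos : ∀ c, pr p (fun ω => C ω = c) ≠ 0 →
      0 < cprob p (fun ω => S ω = a) fun ω => C ω = c)
    {ω : Ω} (hω : p ω ≠ 0) :
    cexp p V (fun ω' => S ω' = a ∧ C ω' = C ω) = cexp p V fun ω' => C ω' = C ω := by
  have hC : pr p (fun ω' => C ω' = C ω) ≠ 0 := pr_ne_zero_of_mem hp rfl hω
  exact h.cexp_eq hC (pr_and_ne_zero_of_cprob_pos (hpos _ hC))

theorem pexp_gFormula {α β γ : Type*} (hp : ∀ ω, 0 ≤ p ω) {A0 A1 : Ω → α} {L0 : Ω → β}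
    {L1 : Ω → γ} {Y V : Ω → ℝ} {a0 a1 : α}
    (hcons : ∀ ω, A0 ω = a0 → A1 ω = a1 → Y ω = V ω)
    (hSRA0 : CondIndep p A0 V L0)
    (hSRA1 : CondIndep p A1 V fun ω => (A0 ω, L0 ω, L1 ω))
    (hpos0 : ∀ l0, pr p (fun ω => L0 ω = l0) ≠ 0 →
      0 < cprob p (fun ω => A0 ω = a0) fun ω => L0 ω = l0)
    (hpos1 : ∀ c, pr p (fun ω => (A0 ω, L0 ω, L1 ω) = c) ≠ 0 →
      0 < cprob p (fun ω => A1 ω = a1) fun ω => (A0 ω, L0 ω, L1 ω) = c) :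
    pexp p (fun ω => cexp p
        (fun ω' => cexp p Y fun ω'' => A0 ω'' = a0 ∧ A1 ω'' = a1 ∧ L0 ω'' = L0 ω' ∧
          L1 ω'' = L1 ω')
        fun ω' => A0 ω' = a0 ∧ L0 ω' = L0 ω) =
      pexp p V := by
  have occasion1 : ∀ ω, A0 ω = a0 → p ω ≠ 0 →
      (cexp p Y fun ω' => A0 ω' = a0 ∧ A1 ω' = a1 ∧ L0 ω' = L0 ω ∧ L1 ω' = L1 ω) =
        cexp p V fun ω' => (A0 ω' = a0 ∧ L0 ω' = L0 ω) ∧ L1 ω' = L1 ω := by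
    intro ω hA hω
    calc _ = cexp p V fun ω' => A1 ω' = a1 ∧ (A0 ω', L0 ω', L1 ω') = (A0 ω, L0 ω, L1 ω) :=
          cexp_congr (fun ω' => by simp only [Prod.mk.injEq, hA]; tauto)
            fun ω' h => hcons ω' h.1 h.2.1
      _ = cexp p V fun ω' => (A0 ω', L0 ω', L1 ω') = (A0 ω, L0 ω, L1 ω) :=
          hSRA1.cexp_eq_of_cprob_pos hp hpos1 hω
      _ = _ := cexp_congr (fun ω' => by simp only [Prod.mk.injEq, hA]; tauto) fun _ _ => rfl
  have occasion0 : ∀ l0, (cexp p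
      (fun ω' => cexp p Y fun ω'' => A0 ω'' = a0 ∧ A1 ω'' = a1 ∧ L0 ω'' = L0 ω' ∧
        L1 ω'' = L1 ω')
      fun ω' => A0 ω' = a0 ∧ L0 ω' = l0) = cexp p V fun ω' => A0 ω' = a0 ∧ L0 ω' = l0 :=
    fun l0 => cexp_tower hp (T := L1) fun ω ⟨hA, hl0⟩ hω => by
      subst hl0
      exact occasion1 ω hA hω
  exact pexp_tower hp (T := L0) fun ω hω => by
    rw [occasion0]
    exact hSRA0.cexp_eq_of_cprob_pos hp hpos0 hω

end FiniteProbability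

theorem stmt_10_general {Ω 𝒳0 𝒳1 𝒲0 𝒲1 : Type*} [Fintype Ω]
    (p : Ω → ℝ) (hp : ∀ ω, 0 ≤ p ω)
    (A0 A1 : Ω → Bool) (X0 : Ω → 𝒳0) (X1 : Ω → 𝒳1) (W0 : Ω → 𝒲0) (W1 : Ω → 𝒲1)
    (Y : Ω → ℝ) (Y' : Bool → Bool → Ω → ℝ) (a0 a1 : Bool)
    (hcons : ∀ ω, Y ω = Y' (A0 ω) (A1 ω) ω)
    -- sequential randomization given L̄(1) = (X̄(1), W̄(1))
    (hSRA0 : CondIndep p A0 (fun ω => Y' a0 a1 ω) (fun ω => (X0 ω, W0 ω)))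
    (hSRA1 : CondIndep p A1 (fun ω => Y' a0 a1 ω)
      (fun ω => (A0 ω, X0 ω, W0 ω, X1 ω, W1 ω)))
    -- positivity
    (hpos0 : ∀ (a : Bool) x0 w0, pr p (fun ω => X0 ω = x0 ∧ W0 ω = w0) ≠ 0 →
      0 < cprob p (fun ω => A0 ω = a) (fun ω => X0 ω = x0 ∧ W0 ω = w0))
    (hpos1 : ∀ (a a' : Bool) x0 w0 x1 w1,
      pr p (fun ω => A0 ω = a' ∧ X0 ω = x0 ∧ W0 ω = w0 ∧ X1 ω = x1 ∧ W1 ω = w1) ≠ 0 →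
      0 < cprob p (fun ω => A1 ω = a)
        (fun ω => A0 ω = a' ∧ X0 ω = x0 ∧ W0 ω = w0 ∧ X1 ω = x1 ∧ W1 ω = w1))
    -- the candidate bridge functions, defined by iterated regression
    (h1 : Bool × Bool → (𝒳0 × 𝒲0) × (𝒳1 × 𝒲1) → ℝ)
    (h0 : Bool × Bool → 𝒳0 × 𝒲0 → ℝ)
    (hh1 : ∀ l0 l1, h1 (a0, a1) (l0, l1) =
      cexp p Y (fun ω => A0 ω = a0 ∧ A1 ω = a1 ∧ (X0 ω, W0 ω) = l0 ∧ (X1 ω, W1 ω) = l1))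
    (hh0 : ∀ l0, h0 (a0, a1) l0 =
      cexp p (fun ω => h1 (a0, a1) ((X0 ω, W0 ω), (X1 ω, W1 ω)))
        (fun ω => A0 ω = a0 ∧ (X0 ω, W0 ω) = l0)) :
    -- first bridge equation (conditioning proxies Z̄(1) = W̄(1))
    (∀ w0 w1 x0 x1,
      pr p (fun ω => A0 ω = a0 ∧ A1 ω = a1 ∧ W0 ω = w0 ∧ W1 ω = w1 ∧
        X0 ω = x0 ∧ X1 ω = x1) ≠ 0 →
      cexp p Y (fun ω => A0 ω = a0 ∧ A1 ω = a1 ∧ W0 ω = w0 ∧ W1 ω = w1 ∧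
          X0 ω = x0 ∧ X1 ω = x1) =
        cexp p (fun ω => h1 (a0, a1) ((X0 ω, W0 ω), (X1 ω, W1 ω)))
          (fun ω => A0 ω = a0 ∧ A1 ω = a1 ∧ W0 ω = w0 ∧ W1 ω = w1 ∧
            X0 ω = x0 ∧ X1 ω = x1)) ∧
    -- second bridge equation
    (∀ w0 x0,
      pr p (fun ω => A0 ω = a0 ∧ W0 ω = w0 ∧ X0 ω = x0) ≠ 0 →
      cexp p (fun ω => h1 (a0, a1) ((X0 ω, W0 ω), (X1 ω, W1 ω)))
          (fun ω => A0 ω = a0 ∧ W0 ω = w0 ∧ X0 ω = x0) =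
        cexp p (fun ω => h0 (a0, a1) (X0 ω, W0 ω))
          (fun ω => A0 ω = a0 ∧ W0 ω = w0 ∧ X0 ω = x0)) ∧
    -- the proximal g-formula coincides with Robins' g-formula for E[Y_{ā(1)}]
    pexp p (fun ω => h0 (a0, a1) (X0 ω, W0 ω)) = pexp p (Y' a0 a1) := by
  refine ⟨fun w0 w1 x0 x1 hne => ?_, fun w0 x0 hne => ?_, ?_⟩
  · rw [cexp_eq_of_forall_eq hne (f := fun ω => h1 (a0, a1) ((X0 ω, W0 ω), (X1 ω, W1 ω)))
      fun ω ⟨_, _, hw0, hw1, hx0, hx1⟩ => by rw [hw0, hw1, hx0, hx1], hh1]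
    exact cexp_congr (fun ω => by simp only [Prod.mk.injEq]; tauto) fun _ _ => rfl
  · rw [cexp_eq_of_forall_eq hne (f := fun ω => h0 (a0, a1) (X0 ω, W0 ω))
      fun ω ⟨_, hw0, hx0⟩ => by rw [hw0, hx0], hh0]
    exact cexp_congr (fun ω => by simp only [Prod.mk.injEq]; tauto) fun _ _ => rfl
  · have hSRA1' : CondIndep p A1 (Y' a0 a1) fun ω => (A0 ω, (X0 ω, W0 ω), (X1 ω, W1 ω)) :=
      hSRA1.of_comp (e := fun c => (c.1, c.2.1.1, c.2.1.2, c.2.2.1, c.2.2.2))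
        fun c c' h => by simp only [Prod.ext_iff] at h ⊢; tauto
    simp only [hh0, hh1]
    refine pexp_gFormula hp (fun ω hA0 hA1 => hA0 ▸ hA1 ▸ hcons ω) hSRA0 hSRA1'
      (fun ⟨x0, w0⟩ h => ?_) (fun ⟨a', (x0, w0), (x1, w1)⟩ h => ?_)
    · simpa only [Prod.mk.injEq] using hpos0 a0 x0 w0 (by simpa only [Prod.mk.injEq] using h)
    · simpa only [Prod.mk.injEq, and_assoc] using
        hpos1 a1 a' x0 w0 x1 w1 (by simpa only [Prod.mk.injEq, and_assoc] using h)

/-- under sequential randomization given `L̄(1) = (X̄(1), W̄(1))` and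
taking `Z̄(1) = W̄(1)`, the iterated regressions `h1(ā, l̄) = E[Y | ā, l̄]` and
`h0(ā, l0) = E[h1(ā, L̄(1)) | a(0), L(0) = l0]` solve the outcome-bridge integral
equations, and `E[h0(ā, L(0))]` coincides with Robins' g-formula for `E[Y_{ā}]`. -/
theorem stmt_10 {Ω 𝒳0 𝒳1 𝒲0 𝒲1 : Type*} [Fintype Ω]
    (p : Ω → ℝ) (hp : ∀ ω, 0 ≤ p ω) (hsum : ∑ ω, p ω = 1)
    (A0 A1 : Ω → Bool) (X0 : Ω → 𝒳0) (X1 : Ω → 𝒳1) (W0 : Ω → 𝒲0) (W1 : Ω → 𝒲1)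
    (Y : Ω → ℝ) (Y' : Bool → Bool → Ω → ℝ) (a0 a1 : Bool)
    (hcons : ∀ ω, Y ω = Y' (A0 ω) (A1 ω) ω)
    -- sequential randomization given L̄(1) = (X̄(1), W̄(1))
    (hSRA0 : CondIndep p A0 (fun ω => Y' a0 a1 ω) (fun ω => (X0 ω, W0 ω)))
    (hSRA1 : CondIndep p A1 (fun ω => Y' a0 a1 ω)
      (fun ω => (A0 ω, X0 ω, W0 ω, X1 ω, W1 ω)))
    -- positivity
    (hpos0 : ∀ (a : Bool) x0 w0, pr p (fun ω => X0 ω = x0 ∧ W0 ω = w0) ≠ 0 →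
      0 < cprob p (fun ω => A0 ω = a) (fun ω => X0 ω = x0 ∧ W0 ω = w0))
    (hpos1 : ∀ (a a' : Bool) x0 w0 x1 w1,
      pr p (fun ω => A0 ω = a' ∧ X0 ω = x0 ∧ W0 ω = w0 ∧ X1 ω = x1 ∧ W1 ω = w1) ≠ 0 →
      0 < cprob p (fun ω => A1 ω = a)
        (fun ω => A0 ω = a' ∧ X0 ω = x0 ∧ W0 ω = w0 ∧ X1 ω = x1 ∧ W1 ω = w1))
    -- the candidate bridge functions, defined by iterated regression
    (h1 : Bool × Bool → (𝒳0 × 𝒲0) × (𝒳1 × 𝒲1) → ℝ)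
    (h0 : Bool × Bool → 𝒳0 × 𝒲0 → ℝ)
    (hh1 : ∀ l0 l1, h1 (a0, a1) (l0, l1) =
      cexp p Y (fun ω => A0 ω = a0 ∧ A1 ω = a1 ∧ (X0 ω, W0 ω) = l0 ∧ (X1 ω, W1 ω) = l1))
    (hh0 : ∀ l0, h0 (a0, a1) l0 =
      cexp p (fun ω => h1 (a0, a1) ((X0 ω, W0 ω), (X1 ω, W1 ω)))
        (fun ω => A0 ω = a0 ∧ (X0 ω, W0 ω) = l0)) :
    -- first bridge equation (conditioning proxies Z̄(1) = W̄(1))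
    (∀ w0 w1 x0 x1,
      pr p (fun ω => A0 ω = a0 ∧ A1 ω = a1 ∧ W0 ω = w0 ∧ W1 ω = w1 ∧
        X0 ω = x0 ∧ X1 ω = x1) ≠ 0 →
      cexp p Y (fun ω => A0 ω = a0 ∧ A1 ω = a1 ∧ W0 ω = w0 ∧ W1 ω = w1 ∧
          X0 ω = x0 ∧ X1 ω = x1) =
        cexp p (fun ω => h1 (a0, a1) ((X0 ω, W0 ω), (X1 ω, W1 ω)))
          (fun ω => A0 ω = a0 ∧ A1 ω = a1 ∧ W0 ω = w0 ∧ W1 ω = w1 ∧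
            X0 ω = x0 ∧ X1 ω = x1)) ∧
    -- second bridge equation
    (∀ w0 x0,
      pr p (fun ω => A0 ω = a0 ∧ W0 ω = w0 ∧ X0 ω = x0) ≠ 0 →
      cexp p (fun ω => h1 (a0, a1) ((X0 ω, W0 ω), (X1 ω, W1 ω)))
          (fun ω => A0 ω = a0 ∧ W0 ω = w0 ∧ X0 ω = x0) =
        cexp p (fun ω => h0 (a0, a1) (X0 ω, W0 ω))
          (fun ω => A0 ω = a0 ∧ W0 ω = w0 ∧ X0 ω = x0)) ∧
    -- the proximal g-formula coincides with Robins' g-formula for E[Y_{ā(1)}]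
    pexp p (fun ω => h0 (a0, a1) (X0 ω, W0 ω)) = pexp p (Y' a0 a1) :=
  stmt_10_general p hp A0 A1 X0 X1 W0 W1 Y Y' a0 a1 hcons hSRA0 hSRA1 hpos0 hpos1 h1 h0 hh1 hh0
end

section
/- With the augmented estimating function Ξ_{ā(1)} defined as in the two-occasion proximal doubly robust construction, if the treatment bridge functions (q1, q0) satisfy their latent-level bridge equations but the functions (h1, h0) used in Ξ are arbitrary measurable functions of (W̄(1), Ā(1), X̄(1)) and (W(0), Ā(1), X(0)) respectively, then still E[Ξ_{ā(1)} | V] = E[Y_{ā(1)} | V]. -/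
open Finset MeasureTheory

open scoped Classical

/-!
Write `w₁ = 1{Ā(1) = ā(1)} q1` and `w₀ = 1{A(0) = a(0)} q0`. By consistency,
`Ξ = w₁ Y_ā − w₁ h1 + w₀ h1 − w₀ h0 + h0`, with `h1`, `h0` evaluated at the counterfactual
proxies. On each latent fibre `(A(0), X̄(1), Ū(1))` the bridge equation for `q1` gives `w₁` the
same conditional mean as `w₀`, and on each fibre `(X(0), U(0))` the bridge equation for `q0`
gives `w₀` conditional mean one. Latent randomization makes the weights conditionally
independent of the counterfactual proxies and outcome, so `E[w₁ g | V] = E[w₀ g | V]` and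
`E[w₀ g | V] = E[g | V]` for every function `g` of them: the `h`-terms cancel in pairs.
-/

section FiniteConditioning

variable {Ω : Type*} [Fintype Ω] {p : Ω → ℝ}

lemma cexp_congr_fun {f g : Ω → ℝ} {E : Ω → Prop} (h : ∀ ω, E ω → f ω = g ω) :
    cexp p f E = cexp p g E := by
  unfold cexp
  congr 1
  refine sum_congr rfl fun ω _ => ?_
  split_ifs with hω
  · rw [h ω hω]
  · rfl

lemma cexp_add (f g : Ω → ℝ) (E : Ω → Prop) :
    cexp p (fun ω => f ω + g ω) E = cexp p f E + cexp p g E := by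
  unfold cexp
  rw [← add_div, ← sum_add_distrib]
  congr 1
  refine sum_congr rfl fun ω _ => ?_
  split_ifs <;> ring

lemma cexp_sub (f g : Ω → ℝ) (E : Ω → Prop) :
    cexp p (fun ω => f ω - g ω) E = cexp p f E - cexp p g E := by
  unfold cexp
  rw [← sub_div, ← sum_sub_distrib]
  congr 1
  refine sum_congr rfl fun ω _ => ?_
  split_ifs <;> ring

lemma cexp_const {E : Ω → Prop} (hE : pr p E ≠ 0) (a : ℝ) : cexp p (fun _ => a) E = a := by
  unfold cexp
  rw [div_eq_iff hE, pr, mul_sum]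
  refine sum_congr rfl fun ω _ => ?_
  split_ifs <;> ring

lemma sum_ite_mul_eq_zero_of_pr_eq_zero (hp : ∀ ω, 0 ≤ p ω) {E : Ω → Prop} (hE : pr p E = 0)
    (f : Ω → ℝ) : (∑ ω, if E ω then p ω * f ω else 0) = 0 := by
  have hnull : ∀ ω, E ω → p ω = 0 := fun ω hω => by
    have := (sum_eq_zero_iff_of_nonneg fun i _ => ?_).1 hE ω (mem_univ ω)
    · simpa [hω] using this
    · split_ifs
      exacts [hp i, le_rfl]
  refine sum_eq_zero fun ω _ => ?_
  split_ifs with hω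
  · rw [hnull ω hω, zero_mul]
  · rfl

lemma pr_ne_zero_of_cprob_pos {Q E : Ω → Prop} (h : 0 < cprob p Q E) :
    pr p (fun ω => Q ω ∧ E ω) ≠ 0 := by
  intro h0
  simp [cprob, h0] at h

lemma cexp_indicator_mul (hp : ∀ ω, 0 ≤ p ω) (Q E : Ω → Prop) [DecidablePred Q] (f : Ω → ℝ) :
    cexp p (fun ω => (if Q ω then 1 else 0) * f ω) E =
      cprob p Q E * cexp p f (fun ω => Q ω ∧ E ω) := by
  have hnum : (∑ ω, if E ω then p ω * ((if Q ω then 1 else 0) * f ω) else 0) =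
      ∑ ω, if Q ω ∧ E ω then p ω * f ω else 0 :=
    sum_congr rfl fun ω _ => by by_cases hQ : Q ω <;> by_cases hE : E ω <;> simp [hQ, hE]
  unfold cexp cprob
  rw [hnum]
  by_cases hQE : pr p (fun ω => Q ω ∧ E ω) = 0
  · rw [hQE, zero_div, zero_mul, div_eq_zero_iff]
    left
    -- `cexp` decides `Q ω ∧ E ω` classically, `hnum` through `instDecidableAnd`
    convert sum_ite_mul_eq_zero_of_pr_eq_zero hp hQE f
  · field_simp

lemma sum_ite_comp_eq_sum_fibers {γ : Type*} (C : Ω → γ) (φ : γ → Prop) (g : Ω → ℝ) :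
    (∑ ω, if φ (C ω) then g ω else 0) =
      ∑ c ∈ univ.image C, if φ c then ∑ ω, if C ω = c then g ω else 0 else 0 := by
  rw [← sum_fiberwise_of_maps_to fun ω _ => mem_image_of_mem C (mem_univ ω)]
  refine sum_congr rfl fun c _ => ?_
  rw [sum_filter]
  split_ifs with hc
  · exact sum_congr rfl fun ω _ => by split_ifs with h1 h2 <;> simp_all
  · exact sum_eq_zero fun ω _ => by split_ifs with h1 h2 <;> simp_all

lemma cexp_comp_eq_of_cexp_fiber_eq (hp : ∀ ω, 0 ≤ p ω) {γ : Type*} (C : Ω → γ) {f g : Ω → ℝ}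
    (h : ∀ c, pr p (fun ω => C ω = c) ≠ 0 →
      cexp p f (fun ω => C ω = c) = cexp p g (fun ω => C ω = c))
    (φ : γ → Prop) :
    cexp p f (fun ω => φ (C ω)) = cexp p g (fun ω => φ (C ω)) := by
  unfold cexp
  congr 1
  rw [sum_ite_comp_eq_sum_fibers, sum_ite_comp_eq_sum_fibers]
  refine sum_congr rfl fun c _ => ?_
  split_ifs
  · by_cases hc : pr p (fun ω => C ω = c) = 0
    · rw [sum_ite_mul_eq_zero_of_pr_eq_zero hp hc, sum_ite_mul_eq_zero_of_pr_eq_zero hp hc]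
    · exact (div_left_inj' hc).1 (h c hc)
  · rfl

/-- Given `C = c`, the factor `F c (S)` is independent of `G c (T)`, so only its conditional
mean matters. -/
lemma CondIndep.cexp_mul_eq_of_cexp_fiber_eq (hp : ∀ ω, 0 ≤ p ω) {α β γ : Type*}
    {S : Ω → α} {T : Ω → β} {C : Ω → γ} (hST : CondIndep p S T C) (F F' : γ → α → ℝ)
    (G : γ → β → ℝ)
    (hF : ∀ c, pr p (fun ω => C ω = c) ≠ 0 →
      cexp p (fun ω => F c (S ω)) (fun ω => C ω = c) =
        cexp p (fun ω => F' c (S ω)) (fun ω => C ω = c))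
    (φ : γ → Prop) :
    cexp p (fun ω => F (C ω) (S ω) * G (C ω) (T ω)) (fun ω => φ (C ω)) =
      cexp p (fun ω => F' (C ω) (S ω) * G (C ω) (T ω)) (fun ω => φ (C ω)) := by
  refine cexp_comp_eq_of_cexp_fiber_eq hp C (fun c hc => ?_) φ
  have fiber (K : γ → α → ℝ) : cexp p (fun ω => K (C ω) (S ω) * G (C ω) (T ω))
      (fun ω => C ω = c) = cexp p (fun ω => K c (S ω) * G c (T ω)) (fun ω => C ω = c) :=
    cexp_congr_fun fun ω hω => by rw [hω]
  rw [fiber F, fiber F', hST _ _ c hc, hST _ _ c hc, hF c hc]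

end FiniteConditioning

section TwoOccasions

variable {Ω 𝒳0 𝒳1 𝒵0 𝒵1 𝒰0 𝒰1 : Type*} [Fintype Ω] {p : Ω → ℝ}
  {A0 A1 : Ω → Bool} {X0 : Ω → 𝒳0} {X1 : Ω → 𝒳1} {Z0 : Ω → 𝒵0} {Z1 : Ω → 𝒵1}
  {U0 : Ω → 𝒰0} {U1 : Ω → 𝒰1} {q0 : 𝒵0 → Bool → 𝒳0 → ℝ}
  {q1 : 𝒵0 × 𝒵1 → Bool × Bool → 𝒳0 × 𝒳1 → ℝ}

lemma cexp_q0_weight_fiber_eq_one (hp : ∀ ω, 0 ≤ p ω) {b0 : Bool} {x0 : 𝒳0} {u0 : 𝒰0}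
    (hpos : pr p (fun ω => U0 ω = u0 ∧ X0 ω = x0) ≠ 0 →
      0 < cprob p (fun ω => A0 ω = b0) (fun ω => U0 ω = u0 ∧ X0 ω = x0))
    (hbridge : pr p (fun ω => A0 ω = b0 ∧ U0 ω = u0 ∧ X0 ω = x0) ≠ 0 →
      (cprob p (fun ω => A0 ω = b0) (fun ω => U0 ω = u0 ∧ X0 ω = x0))⁻¹ =
        cexp p (fun ω => q0 (Z0 ω) b0 (X0 ω)) (fun ω => A0 ω = b0 ∧ U0 ω = u0 ∧ X0 ω = x0))
    (hne : pr p (fun ω => (X0 ω, U0 ω) = (x0, u0)) ≠ 0) :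
    cexp p (fun ω => (if A0 ω = b0 then 1 else 0) * q0 (Z0 ω) b0 x0)
      (fun ω => (X0 ω, U0 ω) = (x0, u0)) = 1 := by
  have hfiber : (fun ω => (X0 ω, U0 ω) = (x0, u0)) = fun ω => U0 ω = u0 ∧ X0 ω = x0 := by
    ext ω
    simp [and_comm]
  rw [hfiber] at hne ⊢
  have hprop := hpos hne
  rw [cexp_indicator_mul hp, cexp_congr_fun (g := fun ω => q0 (Z0 ω) b0 (X0 ω))
    fun ω hω => by rw [hω.2.2], ← hbridge (pr_ne_zero_of_cprob_pos hprop)]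
  exact mul_inv_cancel₀ hprop.ne'

lemma cexp_q1_weight_fiber_eq_q0 (hp : ∀ ω, 0 ≤ p ω) {b0 b1 : Bool} {x0 : 𝒳0} {x1 : 𝒳1}
    {u0 : 𝒰0} {u1 : 𝒰1}
    (hpos : pr p (fun ω => A0 ω = b0 ∧ U0 ω = u0 ∧ U1 ω = u1 ∧ X0 ω = x0 ∧ X1 ω = x1) ≠ 0 →
      0 < cprob p (fun ω => A1 ω = b1)
        (fun ω => A0 ω = b0 ∧ U0 ω = u0 ∧ U1 ω = u1 ∧ X0 ω = x0 ∧ X1 ω = x1))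
    (hbridge : pr p (fun ω => A0 ω = b0 ∧ A1 ω = b1 ∧ U0 ω = u0 ∧ U1 ω = u1 ∧
        X0 ω = x0 ∧ X1 ω = x1) ≠ 0 →
      cexp p (fun ω => q0 (Z0 ω) b0 (X0 ω))
          (fun ω => A0 ω = b0 ∧ U0 ω = u0 ∧ U1 ω = u1 ∧ X0 ω = x0 ∧ X1 ω = x1) /
        cprob p (fun ω => A1 ω = b1)
          (fun ω => A0 ω = b0 ∧ U0 ω = u0 ∧ U1 ω = u1 ∧ X0 ω = x0 ∧ X1 ω = x1) =
      cexp p (fun ω => q1 (Z0 ω, Z1 ω) (b0, b1) (X0 ω, X1 ω))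
        (fun ω => A0 ω = b0 ∧ A1 ω = b1 ∧ U0 ω = u0 ∧ U1 ω = u1 ∧ X0 ω = x0 ∧ X1 ω = x1))
    (hne : pr p (fun ω => (A0 ω, X0 ω, X1 ω, U0 ω, U1 ω) = (b0, x0, x1, u0, u1)) ≠ 0) :
    cexp p (fun ω => (if A1 ω = b1 then 1 else 0) * q1 (Z0 ω, Z1 ω) (b0, b1) (x0, x1))
        (fun ω => (A0 ω, X0 ω, X1 ω, U0 ω, U1 ω) = (b0, x0, x1, u0, u1)) =
      cexp p (fun ω => q0 (Z0 ω) b0 x0)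
        (fun ω => (A0 ω, X0 ω, X1 ω, U0 ω, U1 ω) = (b0, x0, x1, u0, u1)) := by
  have hfiber : (fun ω => (A0 ω, X0 ω, X1 ω, U0 ω, U1 ω) = (b0, x0, x1, u0, u1)) =
      fun ω => A0 ω = b0 ∧ U0 ω = u0 ∧ U1 ω = u1 ∧ X0 ω = x0 ∧ X1 ω = x1 := by
    ext ω
    simp only [Prod.mk.injEq]
    tauto
  have hreorder : (fun ω => A1 ω = b1 ∧ A0 ω = b0 ∧ U0 ω = u0 ∧ U1 ω = u1 ∧
        X0 ω = x0 ∧ X1 ω = x1) =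
      fun ω => A0 ω = b0 ∧ A1 ω = b1 ∧ U0 ω = u0 ∧ U1 ω = u1 ∧ X0 ω = x0 ∧ X1 ω = x1 := by
    ext ω
    tauto
  rw [hfiber] at hne ⊢
  have hprop := hpos hne
  have hjoint := pr_ne_zero_of_cprob_pos hprop
  rw [hreorder] at hjoint
  rw [cexp_indicator_mul hp, hreorder,
    cexp_congr_fun (g := fun ω => q1 (Z0 ω, Z1 ω) (b0, b1) (X0 ω, X1 ω))
      fun ω hω => by rw [hω.2.2.2.2.1, hω.2.2.2.2.2], ← hbridge hjoint,
    cexp_congr_fun (f := fun ω => q0 (Z0 ω) b0 x0) (g := fun ω => q0 (Z0 ω) b0 (X0 ω))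
      fun ω hω => by rw [hω.2.2.2.1]]
  field_simp

lemma cexp_q0_weight_mul_eq (hp : ∀ ω, 0 ≤ p ω) {β : Type*} {T : Ω → β}
    (hCI : CondIndep p (fun ω => (Z0 ω, A0 ω)) T (fun ω => (X0 ω, U0 ω))) {b0 : Bool}
    (hpos : ∀ u0 x0, pr p (fun ω => U0 ω = u0 ∧ X0 ω = x0) ≠ 0 →
      0 < cprob p (fun ω => A0 ω = b0) (fun ω => U0 ω = u0 ∧ X0 ω = x0))
    (hbridge : ∀ u0 x0, pr p (fun ω => A0 ω = b0 ∧ U0 ω = u0 ∧ X0 ω = x0) ≠ 0 →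
      (cprob p (fun ω => A0 ω = b0) (fun ω => U0 ω = u0 ∧ X0 ω = x0))⁻¹ =
        cexp p (fun ω => q0 (Z0 ω) b0 (X0 ω)) (fun ω => A0 ω = b0 ∧ U0 ω = u0 ∧ X0 ω = x0))
    (G : 𝒳0 → β → ℝ) (φ : 𝒳0 → Prop) :
    cexp p (fun ω => (if A0 ω = b0 then 1 else 0) * q0 (Z0 ω) b0 (X0 ω) * G (X0 ω) (T ω))
        (fun ω => φ (X0 ω)) =
      cexp p (fun ω => G (X0 ω) (T ω)) (fun ω => φ (X0 ω)) := by
  have hweight := hCI.cexp_mul_eq_of_cexp_fiber_eq hp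
    (fun c s => (if s.2 = b0 then 1 else 0) * q0 s.1 b0 c.1) (fun _ _ => 1) (fun c t => G c.1 t)
    (fun ⟨x0, u0⟩ hne => by
      rw [cexp_const hne]
      exact cexp_q0_weight_fiber_eq_one hp (hpos u0 x0) (hbridge u0 x0) hne)
    (fun c => φ c.1)
  simpa only [one_mul] using hweight

lemma cexp_q1_weight_mul_eq_q0_weight_mul (hp : ∀ ω, 0 ≤ p ω) {β : Type*} {T : Ω → β}
    (hCI : CondIndep p (fun ω => (Z0 ω, Z1 ω, A1 ω)) T
      (fun ω => (A0 ω, X0 ω, X1 ω, U0 ω, U1 ω))) {b0 b1 : Bool}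
    (hpos : ∀ u0 u1 x0 x1,
      pr p (fun ω => A0 ω = b0 ∧ U0 ω = u0 ∧ U1 ω = u1 ∧ X0 ω = x0 ∧ X1 ω = x1) ≠ 0 →
      0 < cprob p (fun ω => A1 ω = b1)
        (fun ω => A0 ω = b0 ∧ U0 ω = u0 ∧ U1 ω = u1 ∧ X0 ω = x0 ∧ X1 ω = x1))
    (hbridge : ∀ u0 u1 x0 x1, pr p (fun ω => A0 ω = b0 ∧ A1 ω = b1 ∧ U0 ω = u0 ∧
        U1 ω = u1 ∧ X0 ω = x0 ∧ X1 ω = x1) ≠ 0 →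
      cexp p (fun ω => q0 (Z0 ω) b0 (X0 ω))
          (fun ω => A0 ω = b0 ∧ U0 ω = u0 ∧ U1 ω = u1 ∧ X0 ω = x0 ∧ X1 ω = x1) /
        cprob p (fun ω => A1 ω = b1)
          (fun ω => A0 ω = b0 ∧ U0 ω = u0 ∧ U1 ω = u1 ∧ X0 ω = x0 ∧ X1 ω = x1) =
      cexp p (fun ω => q1 (Z0 ω, Z1 ω) (b0, b1) (X0 ω, X1 ω))
        (fun ω => A0 ω = b0 ∧ A1 ω = b1 ∧ U0 ω = u0 ∧ U1 ω = u1 ∧ X0 ω = x0 ∧ X1 ω = x1))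
    (G : 𝒳0 × 𝒳1 → β → ℝ) (φ : 𝒳0 → Prop) :
    cexp p (fun ω => (if A0 ω = b0 ∧ A1 ω = b1 then 1 else 0) *
          q1 (Z0 ω, Z1 ω) (b0, b1) (X0 ω, X1 ω) * G (X0 ω, X1 ω) (T ω))
        (fun ω => φ (X0 ω)) =
      cexp p (fun ω => (if A0 ω = b0 then 1 else 0) * q0 (Z0 ω) b0 (X0 ω) *
          G (X0 ω, X1 ω) (T ω))
        (fun ω => φ (X0 ω)) := by
  refine hCI.cexp_mul_eq_of_cexp_fiber_eq hp
    (fun c s => (if c.1 = b0 ∧ s.2.2 = b1 then 1 else 0) *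
      q1 (s.1, s.2.1) (b0, b1) (c.2.1, c.2.2.1))
    (fun c s => (if c.1 = b0 then 1 else 0) * q0 s.1 b0 c.2.1)
    (fun c t => G (c.2.1, c.2.2.1) t) (fun ⟨a0, x0, x1, u0, u1⟩ hne => ?_) (fun c => φ c.2.1)
  by_cases ha0 : a0 = b0
  · subst ha0
    simpa only [true_and, if_true, one_mul] using
      cexp_q1_weight_fiber_eq_q0 hp (hpos u0 u1 x0 x1) (hbridge u0 u1 x0 x1) hne
  · simp [ha0]

end TwoOccasions

theorem stmt_14_general {Ω 𝒳0 𝒳1 𝒵0 𝒵1 𝒲0 𝒲1 𝒰0 𝒰1 𝒱 : Type*} [Fintype Ω]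
    (p : Ω → ℝ) (hp : ∀ ω, 0 ≤ p ω)
    (A0 A1 : Ω → Bool) (X0 : Ω → 𝒳0) (X1 : Ω → 𝒳1)
    (Z0 : Ω → 𝒵0) (Z1 : Ω → 𝒵1) (W0 : Ω → 𝒲0) (W1 : Ω → 𝒲1)
    (U0 : Ω → 𝒰0) (U1 : Ω → 𝒰1)
    (Y : Ω → ℝ) (Y' : Bool → Bool → Ω → ℝ) (W1' : Bool → Ω → 𝒲1)
    -- arbitrary measurable functions in place of the outcome bridges
    (h1 : 𝒲0 × 𝒲1 → Bool × Bool → 𝒳0 × 𝒳1 → ℝ)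
    (h0 : 𝒲0 → Bool × Bool → 𝒳0 → ℝ)
    (q0 : 𝒵0 → Bool → 𝒳0 → ℝ)
    (q1 : 𝒵0 × 𝒵1 → Bool × Bool → 𝒳0 × 𝒳1 → ℝ)
    (v : 𝒳0 → 𝒱)
    -- consistency and positivity
    (hconsY : ∀ ω, Y ω = Y' (A0 ω) (A1 ω) ω)
    (hconsW : ∀ ω, W1 ω = W1' (A0 ω) ω)
    (hpos0 : ∀ (a : Bool) u0 x0, pr p (fun ω => U0 ω = u0 ∧ X0 ω = x0) ≠ 0 →
      0 < cprob p (fun ω => A0 ω = a) (fun ω => U0 ω = u0 ∧ X0 ω = x0))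
    (hpos1 : ∀ (a a' : Bool) u0 u1 x0 x1,
      pr p (fun ω => A0 ω = a' ∧ U0 ω = u0 ∧ U1 ω = u1 ∧ X0 ω = x0 ∧ X1 ω = x1) ≠ 0 →
      0 < cprob p (fun ω => A1 ω = a)
        (fun ω => A0 ω = a' ∧ U0 ω = u0 ∧ U1 ω = u1 ∧ X0 ω = x0 ∧ X1 ω = x1))
    -- sequential proximal latent randomization
    (hLR1 : ∀ b0 b1 : Bool, CondIndep p (fun ω => (Z0 ω, Z1 ω, A1 ω))
      (fun ω => (W0 ω, W1' b0 ω, Y' b0 b1 ω))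
      (fun ω => (A0 ω, X0 ω, X1 ω, U0 ω, U1 ω)))
    (hLR0 : ∀ b0 b1 : Bool, CondIndep p (fun ω => (Z0 ω, A0 ω))
      (fun ω => (W0 ω, Y' b0 b1 ω)) (fun ω => (X0 ω, U0 ω)))
    -- latent-level treatment bridge equations for (q0, q1)
    (hbridgeq0 : ∀ (b0 : Bool) u0 x0,
      pr p (fun ω => A0 ω = b0 ∧ U0 ω = u0 ∧ X0 ω = x0) ≠ 0 →
      (cprob p (fun ω => A0 ω = b0) (fun ω => U0 ω = u0 ∧ X0 ω = x0))⁻¹ =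
        cexp p (fun ω => q0 (Z0 ω) b0 (X0 ω))
          (fun ω => A0 ω = b0 ∧ U0 ω = u0 ∧ X0 ω = x0))
    (hbridgeq1 : ∀ (b0 b1 : Bool) u0 u1 x0 x1,
      pr p (fun ω => A0 ω = b0 ∧ A1 ω = b1 ∧ U0 ω = u0 ∧ U1 ω = u1 ∧
        X0 ω = x0 ∧ X1 ω = x1) ≠ 0 →
      cexp p (fun ω => q0 (Z0 ω) b0 (X0 ω))
          (fun ω => A0 ω = b0 ∧ U0 ω = u0 ∧ U1 ω = u1 ∧ X0 ω = x0 ∧ X1 ω = x1) /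
        cprob p (fun ω => A1 ω = b1)
          (fun ω => A0 ω = b0 ∧ U0 ω = u0 ∧ U1 ω = u1 ∧ X0 ω = x0 ∧ X1 ω = x1) =
      cexp p (fun ω => q1 (Z0 ω, Z1 ω) (b0, b1) (X0 ω, X1 ω))
        (fun ω => A0 ω = b0 ∧ A1 ω = b1 ∧ U0 ω = u0 ∧ U1 ω = u1 ∧
          X0 ω = x0 ∧ X1 ω = x1))
    -- the augmented (doubly-robust) estimating function Ξ
    (Xi : Bool × Bool → Ω → ℝ)
    (hXi : ∀ (b0 b1 : Bool) ω, Xi (b0, b1) ω =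
      (if A0 ω = b0 ∧ A1 ω = b1 then (1 : ℝ) else 0) *
          q1 (Z0 ω, Z1 ω) (b0, b1) (X0 ω, X1 ω) *
          (Y ω - h1 (W0 ω, W1 ω) (b0, b1) (X0 ω, X1 ω)) +
        (if A0 ω = b0 then (1 : ℝ) else 0) * q0 (Z0 ω) b0 (X0 ω) *
          (h1 (W0 ω, W1 ω) (b0, b1) (X0 ω, X1 ω) - h0 (W0 ω) (b0, b1) (X0 ω)) +
        h0 (W0 ω) (b0, b1) (X0 ω)) :
    ∀ (b0 b1 : Bool) (c : 𝒱), pr p (fun ω => v (X0 ω) = c) ≠ 0 →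
      cexp p (Xi (b0, b1)) (fun ω => v (X0 ω) = c) =
        cexp p (Y' b0 b1) (fun ω => v (X0 ω) = c) := by
  intro b0 b1 c _
  have hdecomp : Xi (b0, b1) = fun ω =>
      ((if A0 ω = b0 ∧ A1 ω = b1 then 1 else 0) * q1 (Z0 ω, Z1 ω) (b0, b1) (X0 ω, X1 ω) *
          Y' b0 b1 ω -
        (if A0 ω = b0 ∧ A1 ω = b1 then 1 else 0) * q1 (Z0 ω, Z1 ω) (b0, b1) (X0 ω, X1 ω) *
          h1 (W0 ω, W1' b0 ω) (b0, b1) (X0 ω, X1 ω)) +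
      ((if A0 ω = b0 then 1 else 0) * q0 (Z0 ω) b0 (X0 ω) *
          h1 (W0 ω, W1' b0 ω) (b0, b1) (X0 ω, X1 ω) -
        (if A0 ω = b0 then 1 else 0) * q0 (Z0 ω) b0 (X0 ω) * h0 (W0 ω) (b0, b1) (X0 ω)) +
      h0 (W0 ω) (b0, b1) (X0 ω) := by
    funext ω
    rw [hXi, hconsY, hconsW]
    by_cases hA0 : A0 ω = b0 <;> by_cases hA1 : A1 ω = b1 <;> simp [hA0, hA1] <;> ring
  have weight1 :=
    cexp_q1_weight_mul_eq_q0_weight_mul hp (hLR1 b0 b1) (hpos1 b1 b0) (hbridgeq1 b0 b1)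
  have weight0 := cexp_q0_weight_mul_eq hp (hLR0 b0 b1) (hpos0 b0) (hbridgeq0 b0)
  have hY1 := weight1 (fun _ t => t.2.2) (fun x => v x = c)
  have hH1 := weight1 (fun x t => h1 (t.1, t.2.1) (b0, b1) x) (fun x => v x = c)
  have hH0 := weight0 (fun x t => h0 t.1 (b0, b1) x) (fun x => v x = c)
  have hY0 := weight0 (fun _ t => t.2) (fun x => v x = c)
  dsimp only at hY1 hH1 hH0 hY0
  rw [hdecomp, cexp_add, cexp_add, cexp_sub, cexp_sub, hY1, hH1, hH0, hY0]
  ring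

/-- double robustness, treatment-bridge side: if `(q1, q0)` satisfy their
latent-level treatment bridge equations, then the augmented estimating function `Ξ` built
with *arbitrary* functions `(h1, h0)` of the outcome-inducing proxies still satisfies
`E[Ξ_{ā(1)} | V] = E[Y_{ā(1)} | V]`. -/
theorem stmt_14 {Ω 𝒳0 𝒳1 𝒵0 𝒵1 𝒲0 𝒲1 𝒰0 𝒰1 𝒱 : Type*} [Fintype Ω]
    (p : Ω → ℝ) (hp : ∀ ω, 0 ≤ p ω) (hsum : ∑ ω, p ω = 1)
    (A0 A1 : Ω → Bool) (X0 : Ω → 𝒳0) (X1 : Ω → 𝒳1)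
    (Z0 : Ω → 𝒵0) (Z1 : Ω → 𝒵1) (W0 : Ω → 𝒲0) (W1 : Ω → 𝒲1)
    (U0 : Ω → 𝒰0) (U1 : Ω → 𝒰1)
    (Y : Ω → ℝ) (Y' : Bool → Bool → Ω → ℝ) (W1' : Bool → Ω → 𝒲1)
    -- arbitrary measurable functions in place of the outcome bridges
    (h1 : 𝒲0 × 𝒲1 → Bool × Bool → 𝒳0 × 𝒳1 → ℝ)
    (h0 : 𝒲0 → Bool × Bool → 𝒳0 → ℝ)
    (q0 : 𝒵0 → Bool → 𝒳0 → ℝ)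
    (q1 : 𝒵0 × 𝒵1 → Bool × Bool → 𝒳0 × 𝒳1 → ℝ)
    (v : 𝒳0 → 𝒱)
    -- consistency and positivity
    (hconsY : ∀ ω, Y ω = Y' (A0 ω) (A1 ω) ω)
    (hconsW : ∀ ω, W1 ω = W1' (A0 ω) ω)
    (hpos0 : ∀ (a : Bool) u0 x0, pr p (fun ω => U0 ω = u0 ∧ X0 ω = x0) ≠ 0 →
      0 < cprob p (fun ω => A0 ω = a) (fun ω => U0 ω = u0 ∧ X0 ω = x0))
    (hpos1 : ∀ (a a' : Bool) u0 u1 x0 x1,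
      pr p (fun ω => A0 ω = a' ∧ U0 ω = u0 ∧ U1 ω = u1 ∧ X0 ω = x0 ∧ X1 ω = x1) ≠ 0 →
      0 < cprob p (fun ω => A1 ω = a)
        (fun ω => A0 ω = a' ∧ U0 ω = u0 ∧ U1 ω = u1 ∧ X0 ω = x0 ∧ X1 ω = x1))
    -- sequential proximal latent randomization
    (hLR1 : ∀ b0 b1 : Bool, CondIndep p (fun ω => (Z0 ω, Z1 ω, A1 ω))
      (fun ω => (W0 ω, W1' b0 ω, Y' b0 b1 ω))
      (fun ω => (A0 ω, X0 ω, X1 ω, U0 ω, U1 ω)))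
    (hLR0 : ∀ b0 b1 : Bool, CondIndep p (fun ω => (Z0 ω, A0 ω))
      (fun ω => (W0 ω, Y' b0 b1 ω)) (fun ω => (X0 ω, U0 ω)))
    -- latent-level treatment bridge equations for (q0, q1)
    (hbridgeq0 : ∀ (b0 : Bool) u0 x0,
      pr p (fun ω => A0 ω = b0 ∧ U0 ω = u0 ∧ X0 ω = x0) ≠ 0 →
      (cprob p (fun ω => A0 ω = b0) (fun ω => U0 ω = u0 ∧ X0 ω = x0))⁻¹ =
        cexp p (fun ω => q0 (Z0 ω) b0 (X0 ω))
          (fun ω => A0 ω = b0 ∧ U0 ω = u0 ∧ X0 ω = x0))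
    (hbridgeq1 : ∀ (b0 b1 : Bool) u0 u1 x0 x1,
      pr p (fun ω => A0 ω = b0 ∧ A1 ω = b1 ∧ U0 ω = u0 ∧ U1 ω = u1 ∧
        X0 ω = x0 ∧ X1 ω = x1) ≠ 0 →
      cexp p (fun ω => q0 (Z0 ω) b0 (X0 ω))
          (fun ω => A0 ω = b0 ∧ U0 ω = u0 ∧ U1 ω = u1 ∧ X0 ω = x0 ∧ X1 ω = x1) /
        cprob p (fun ω => A1 ω = b1)
          (fun ω => A0 ω = b0 ∧ U0 ω = u0 ∧ U1 ω = u1 ∧ X0 ω = x0 ∧ X1 ω = x1) =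
      cexp p (fun ω => q1 (Z0 ω, Z1 ω) (b0, b1) (X0 ω, X1 ω))
        (fun ω => A0 ω = b0 ∧ A1 ω = b1 ∧ U0 ω = u0 ∧ U1 ω = u1 ∧
          X0 ω = x0 ∧ X1 ω = x1))
    -- the augmented (doubly-robust) estimating function Ξ
    (Xi : Bool × Bool → Ω → ℝ)
    (hXi : ∀ (b0 b1 : Bool) ω, Xi (b0, b1) ω =
      (if A0 ω = b0 ∧ A1 ω = b1 then (1 : ℝ) else 0) *
          q1 (Z0 ω, Z1 ω) (b0, b1) (X0 ω, X1 ω) *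
          (Y ω - h1 (W0 ω, W1 ω) (b0, b1) (X0 ω, X1 ω)) +
        (if A0 ω = b0 then (1 : ℝ) else 0) * q0 (Z0 ω) b0 (X0 ω) *
          (h1 (W0 ω, W1 ω) (b0, b1) (X0 ω, X1 ω) - h0 (W0 ω) (b0, b1) (X0 ω)) +
        h0 (W0 ω) (b0, b1) (X0 ω)) :
    ∀ (b0 b1 : Bool) (c : 𝒱), pr p (fun ω => v (X0 ω) = c) ≠ 0 →
      cexp p (Xi (b0, b1)) (fun ω => v (X0 ω) = c) =
        cexp p (Y' b0 b1) (fun ω => v (X0 ω) = c) :=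
  stmt_14_general p hp A0 A1 X0 X1 Z0 Z1 W0 W1 U0 U1 Y Y' W1' h1 h0 q0 q1 v hconsY hconsW hpos0
    hpos1 hLR1 hLR0 hbridgeq0 hbridgeq1 Xi hXi
end
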